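/- The polynomial r(z) = z¹² − 3z¹¹ + z¹⁰ + 7z⁹ − 8z⁸ − 4z⁷ + 13z⁶ − 4z⁵ − 8z⁴ + 7z³ + z² − 3z + 1 is irreducible over ℚ. In the degree-12 number field F = ℚ[z]/(r(z)), the element w = z¹¹ − z¹⁰ − 3z⁹ + 4z⁸ + 5z⁷ − 6z⁶ − 2z⁵ + 7z⁴ + z³ − 4z² + z + 2 is a root of w⁶ − 2w⁵ + 2w⁴ − 3w³ + 2w² − 2w + 1, the element ζ = 2z¹¹ − 4z¹⁰ − 3z⁹ + 14z⁸ − 4z⁷ − 16z⁶ + 16z⁵ + 8z⁴ − 14z³ + 2z² + 6z − 2 is a primitive 7th root of unity (it satisfies ζ⁶ + ζ⁵ + ζ⁴ + ζ³ + ζ² + ζ + 1 = 0), and F is generated over ℚ by w and ζ, so that F ≅ ℚ(w, ζ₇). -/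

import Mathlib

/-!
Modulo 2, `r` has no monic factor of degree 1 to 5 and its monic sextic factors are not
self-reciprocal (exhaustive search). So a proper factorization over `ℤ` is `r = f g` with `f`, `g`
monic irreducible sextics. As `r` is self-reciprocal, the prime `g` divides `r = f* g*` (`*` the
reversal): either `g ∣ g*`, impossible mod 2, or `g ∣ f*`, and then `c r = f f*` for an integer
`c`. On the unit circle `f f*(z) = z⁶ |f(z)|²`, whereas `r(1) = 1 > 0` and
`r(z) / z⁶ = -2359/15625 < 0` at `z = (3 + 4i)/5`; hence `c = 0`, absurd.

The relations satisfied by `w` and `ζ`, and `z = -ζ³ - ζ⁴ - ζ⁵ + wζ⁴` (so `w`, `ζ` generate `F`),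
are checked by computing remainders modulo `r` on coefficient lists.
-/

open Polynomial

/-- The degree-12 polynomial `r(z)` defining the field `F = ℚ(w, ζ₇)`. -/
noncomputable def rpoly : ℚ[X] :=
  X ^ 12 - 3 * X ^ 11 + X ^ 10 + 7 * X ^ 9 - 8 * X ^ 8 - 4 * X ^ 7 + 13 * X ^ 6
    - 4 * X ^ 5 - 8 * X ^ 4 + 7 * X ^ 3 + X ^ 2 - 3 * X + 1

/-- The generator `z` of `F = ℚ[z]/(r(z))`. -/
noncomputable def zF : AdjoinRoot rpoly := AdjoinRoot.root rpoly

/-- The element `w ∈ F`, a root of `w⁶ − 2w⁵ + 2w⁴ − 3w³ + 2w² − 2w + 1`. -/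
noncomputable def wF : AdjoinRoot rpoly :=
  zF ^ 11 - zF ^ 10 - 3 * zF ^ 9 + 4 * zF ^ 8 + 5 * zF ^ 7 - 6 * zF ^ 6 - 2 * zF ^ 5
    + 7 * zF ^ 4 + zF ^ 3 - 4 * zF ^ 2 + zF + 2

/-- The element `ζ ∈ F`, a primitive 7th root of unity. -/
noncomputable def zetaF : AdjoinRoot rpoly :=
  2 * zF ^ 11 - 4 * zF ^ 10 - 3 * zF ^ 9 + 14 * zF ^ 8 - 4 * zF ^ 7 - 16 * zF ^ 6
    + 16 * zF ^ 5 + 8 * zF ^ 4 - 14 * zF ^ 3 + 2 * zF ^ 2 + 6 * zF - 2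

namespace PolyList

variable {R : Type*} [CommRing R]

noncomputable def toPoly : List R → R[X]
  | [] => 0
  | a :: l => C a + X * toPoly l

@[simp] lemma toPoly_nil : toPoly ([] : List R) = 0 := rfl

@[simp] lemma toPoly_cons (a : R) (l : List R) : toPoly (a :: l) = C a + X * toPoly l := rfl

lemma coeff_toPoly (l : List R) (n : ℕ) : (toPoly l).coeff n = l.getD n 0 := by
  induction l generalizing n with
  | nil => simp
  | cons a l ih => cases n <;> simp [coeff_X_mul, coeff_C, ih]

lemma toPoly_append (l m : List R) : toPoly (l ++ m) = toPoly l + X ^ l.length * toPoly m := by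
  induction l with
  | nil => simp
  | cons a l ih => simp only [List.cons_append, toPoly_cons, ih, List.length_cons]; ring

lemma toPoly_map {S : Type*} [CommRing S] (f : R →+* S) (l : List R) :
    (toPoly l).map f = toPoly (l.map f) := by
  induction l with
  | nil => simp
  | cons a l ih => simp [ih]

lemma degree_toPoly_lt (l : List R) : (toPoly l).degree < l.length :=
  (degree_lt_iff_coeff_zero _ _).2 fun _ hm => by rw [coeff_toPoly, List.getD_eq_default _ _ hm]

lemma toPoly_eq_zero_iff {l : List R} : toPoly l = 0 ↔ ∀ x ∈ l, x = 0 := by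
  constructor
  · intro h x hx
    obtain ⟨n, hn, rfl⟩ := List.getElem_of_mem hx
    rw [← List.getD_eq_getElem _ 0 hn, ← coeff_toPoly, h, coeff_zero]
  · intro h
    ext n
    rw [coeff_toPoly, coeff_zero]
    rcases lt_or_ge n l.length with hn | hn
    · exact (List.getD_eq_getElem _ _ hn).trans (h _ (List.getElem_mem hn))
    · exact List.getD_eq_default _ _ hn

@[simp] lemma toPoly_replicate_zero (n : ℕ) : toPoly (List.replicate n (0 : R)) = 0 :=
  toPoly_eq_zero_iff.2 fun _ => List.eq_of_mem_replicate

lemma toPoly_inj {l m : List R} (h : l.length = m.length) : toPoly l = toPoly m ↔ l = m := by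
  refine ⟨fun hlm => List.ext_getElem h fun n h₁ h₂ => ?_, congrArg _⟩
  have := congrArg (coeff · n) hlm
  simpa [coeff_toPoly, List.getD_eq_getElem, h₁, h₂] using this

section Concat

variable {a : R} (l : List R)

lemma natDegree_toPoly_concat (ha : a ≠ 0) : (toPoly (l ++ [a])).natDegree = l.length := by
  refine natDegree_eq_of_le_of_coeff_ne_zero ((natDegree_le_iff_coeff_eq_zero).2 fun n hn => ?_) ?_
  · rw [coeff_toPoly, List.getD_eq_default]
    simpa using hn
  · simpa [coeff_toPoly, List.getD_append_right] using ha

lemma monic_toPoly_concat_one [Nontrivial R] : (toPoly (l ++ [1])).Monic := by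
  rw [Monic, leadingCoeff, natDegree_toPoly_concat l one_ne_zero, coeff_toPoly,
    List.getD_append_right _ _ _ _ le_rfl, Nat.sub_self, List.getD_cons_zero]

lemma reverse_toPoly_concat (ha : a ≠ 0) :
    (toPoly (l ++ [a])).reverse = toPoly (l ++ [a]).reverse := by
  ext n
  rw [coeff_reverse, natDegree_toPoly_concat l ha, coeff_toPoly, coeff_toPoly]
  rcases le_or_gt n l.length with hn | hn
  · rw [revAt_le hn,
      List.getD_reverse _ (by simp only [List.length_append, List.length_singleton]; omega)]
    simp
  · rw [revAt_eq_self_of_lt hn, List.getD_eq_default _ _ (by simpa using hn),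
      List.getD_eq_default _ _ (by simpa using hn)]

lemma eq_toPoly_coeffs_of_monic {h : R[X]} (hm : h.Monic) :
    h = toPoly (List.ofFn (fun i : Fin h.natDegree => h.coeff i) ++ [1]) := by
  ext n
  rw [coeff_toPoly]
  rcases lt_trichotomy n h.natDegree with hn | rfl | hn
  · rw [List.getD_append _ _ _ _ (by simpa using hn), List.getD_eq_getElem _ _ (by simpa using hn),
      List.getElem_ofFn]
  · rw [List.getD_append_right _ _ _ _ (by simp)]
    simpa using hm.coeff_natDegree
  · rw [List.getD_eq_default _ _ (by simpa using hn), coeff_eq_zero_of_natDegree_lt hn]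

end Concat

def add : List R → List R → List R
  | [], m => m
  | l, [] => l
  | a :: l, b :: m => (a + b) :: add l m

def mul : List R → List R → List R
  | [], _ => []
  | a :: l, m => add (m.map (a * ·)) (0 :: mul l m)

def comp : List R → List R → List R
  | [], _ => []
  | a :: p, q => add [a] (mul q (comp p q))

@[simp] lemma toPoly_add (l m : List R) : toPoly (add l m) = toPoly l + toPoly m := by
  induction l generalizing m with
  | nil => simp [add]
  | cons a l ih =>
    cases m
    · simp only [add, toPoly_cons, toPoly_nil, add_zero]
    · simp only [add, toPoly_cons, map_add, ih]
      ring

lemma toPoly_map_mul (a : R) (l : List R) : toPoly (l.map (a * ·)) = C a * toPoly l := by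
  induction l with
  | nil => simp
  | cons b l ih =>
    simp only [List.map_cons, toPoly_cons, map_mul, ih]
    ring

@[simp] lemma toPoly_mul (l m : List R) : toPoly (mul l m) = toPoly l * toPoly m := by
  induction l with
  | nil => simp [mul]
  | cons a l ih =>
    simp only [mul, toPoly_add, toPoly_map_mul, toPoly_cons, map_zero, ih, zero_add]
    ring

@[simp] lemma toPoly_comp (p q : List R) : toPoly (comp p q) = (toPoly p).comp (toPoly q) := by
  induction p with
  | nil => simp [comp]
  | cons a p ih => simp [comp, ih, mul_comm]

def mulXAddMod (hl : List R) (c : R) (r : List R) : List R :=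
  List.zipWith (fun x y => x - r.getLastD c * y) (c :: r).dropLast hl

def modMonic (hl : List R) : List R → List R
  | [] => List.replicate hl.length 0
  | c :: p => mulXAddMod hl c (modMonic hl p)

lemma length_modMonic (hl p : List R) : (modMonic hl p).length = hl.length := by
  induction p with
  | nil => simp [modMonic]
  | cons c p ih => simp [modMonic, mulXAddMod, ih]

lemma toPoly_zipWith_sub_mul (t : R) {l m : List R} (h : l.length = m.length) :
    toPoly (List.zipWith (fun x y => x - t * y) l m) = toPoly l - C t * toPoly m := by
  induction l generalizing m with
  | nil => simp [List.length_eq_zero_iff.1 h.symm]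
  | cons a l ih =>
    obtain ⟨b, m, rfl⟩ := List.exists_cons_of_length_eq_add_one h.symm
    simp only [List.zipWith_cons_cons, toPoly_cons, map_sub, map_mul, ih (Nat.succ_injective h)]
    ring

lemma toPoly_mulXAddMod (hl r : List R) (c : R) (hr : r.length = hl.length) :
    toPoly (mulXAddMod hl c r) = C c + X * toPoly r - C (r.getLastD c) * toPoly (hl ++ [1]) := by
  rcases List.eq_nil_or_concat' r with rfl | ⟨r, t, rfl⟩
  · simp [List.length_eq_zero_iff.1 hr.symm, mulXAddMod]
  · rw [mulXAddMod, ← List.cons_append, List.dropLast_concat, List.getLastD_concat,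
      toPoly_zipWith_sub_mul _ (by simpa using hr), toPoly_append, toPoly_append]
    simp only [toPoly_cons, toPoly_nil, List.length_cons, List.length_nil, ← hr,
      List.length_append, C_1]
    ring

lemma exists_toPoly_eq_modMonic_add (hl p : List R) :
    ∃ q, toPoly (modMonic hl p) + toPoly (hl ++ [1]) * q = toPoly p := by
  induction p with
  | nil => exact ⟨0, by simp [modMonic]⟩
  | cons c p ih =>
    obtain ⟨q, hq⟩ := ih
    refine ⟨C ((modMonic hl p).getLastD c) + X * q, ?_⟩
    rw [modMonic, toPoly_mulXAddMod _ _ _ (length_modMonic hl p), toPoly_cons, ← hq]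
    ring

theorem modByMonic_toPoly [Nontrivial R] (hl p : List R) :
    toPoly p %ₘ toPoly (hl ++ [1]) = toPoly (modMonic hl p) := by
  obtain ⟨q, hq⟩ := exists_toPoly_eq_modMonic_add hl p
  refine (div_modByMonic_unique q _ (monic_toPoly_concat_one hl) ⟨hq, ?_⟩).2
  rw [degree_eq_natDegree (monic_toPoly_concat_one hl).ne_zero,
    natDegree_toPoly_concat hl one_ne_zero, ← length_modMonic hl p]
  exact degree_toPoly_lt _

lemma dvd_toPoly_iff_modMonic [Nontrivial R] {hl p : List R} :
    toPoly (hl ++ [1]) ∣ toPoly p ↔ ∀ x ∈ modMonic hl p, x = 0 := by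
  rw [← modByMonic_eq_zero_iff_dvd (monic_toPoly_concat_one hl), modByMonic_toPoly,
    toPoly_eq_zero_iff]

lemma mk_toPoly_eq_of_modMonic_eq [Nontrivial R] {f : R[X]} {hl p q : List R}
    (hf : f = toPoly (hl ++ [1])) (h : modMonic hl p = modMonic hl q) :
    AdjoinRoot.mk f (toPoly p) = AdjoinRoot.mk f (toPoly q) := by
  subst hf
  have hmod (p : List R) : AdjoinRoot.mk (toPoly (hl ++ [1])) (toPoly p) =
      AdjoinRoot.mk (toPoly (hl ++ [1])) (toPoly (modMonic hl p)) := by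
    conv_lhs => rw [← modByMonic_add_div (toPoly p) (toPoly (hl ++ [1]))]
    simp [modByMonic_toPoly]
  rw [hmod, h, ← hmod]

end PolyList

lemma AdjoinRoot.aeval_mk_eq_mk_comp {R : Type*} [CommRing R] (f p q : R[X]) :
    aeval (AdjoinRoot.mk f q) p = AdjoinRoot.mk f (p.comp q) := by
  rw [← AdjoinRoot.aeval_eq (p.comp q), aeval_comp, AdjoinRoot.aeval_eq]

lemma Polynomial.Monic.reverse_map {R S : Type*} [CommRing R] [CommRing S] [Nontrivial S]
    {p : R[X]} (hp : p.Monic) (f : R →+* S) : (p.map f).reverse = p.reverse.map f := by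
  rw [reverse, reverse, hp.natDegree_map, reflect_map]

lemma Polynomial.reverse_eq_self_of_dvd_reverse {p : (ZMod 2)[X]} (hp : p.Monic)
    (hdvd : p ∣ p.reverse) : p.reverse = p := by
  have hc : p.reverse.leadingCoeff ≠ 0 := by
    rw [reverse_leadingCoeff, Ne, trailingCoeff_eq_zero]
    exact hp.ne_zero
  have h1 : p.reverse.leadingCoeff = 1 := (by decide : ∀ c : ZMod 2, c ≠ 0 → c = 1) _ hc
  rw [eq_leadingCoeff_mul_of_monic_of_dvd_of_natDegree_le hp hdvd (reverse_natDegree_le p), h1,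
    C_1, one_mul]

lemma Polynomial.aeval_mul_reverse_of_norm_eq_one (f : ℤ[X]) {z : ℂ} (hz : ‖z‖ = 1) :
    aeval z (f * f.reverse) = z ^ f.natDegree * (Complex.normSq (aeval z f) : ℂ) := by
  have hz0 : z ≠ 0 := by rintro rfl; simp at hz
  let := invertibleOfNonzero hz0
  have hinv : z⁻¹ = (starRingEnd ℂ) z := by
    rw [Complex.inv_def, Complex.normSq_eq_norm_sq, hz]; simp
  have hrev : aeval z f.reverse * z⁻¹ ^ f.natDegree = aeval z⁻¹ f := by
    simpa [aeval_def, invOf_eq_inv] using eval₂_reverse_mul_pow (algebraMap ℤ ℂ) z⁻¹ f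
  have hconj : aeval ((starRingEnd ℂ) z) f = (starRingEnd ℂ) (aeval z f) :=
    aeval_algHom_apply (starRingEnd ℂ).toIntAlgHom z f
  calc aeval z (f * f.reverse)
      = z ^ f.natDegree * (aeval z f * (aeval z f.reverse * z⁻¹ ^ f.natDegree)) := by
        rw [map_mul, inv_pow]; field_simp
    _ = _ := by rw [hrev, hinv, hconj, Complex.mul_conj]

open PolyList

def rCoeffs : List ℤ := [1, -3, 1, 7, -8, -4, 13, -4, -8, 7, 1, -3]

noncomputable def rpolyInt : ℤ[X] := toPoly (rCoeffs ++ [1])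

lemma rpolyInt_monic : rpolyInt.Monic := monic_toPoly_concat_one _

lemma rpolyInt_natDegree : rpolyInt.natDegree = 12 := natDegree_toPoly_concat _ one_ne_zero

lemma reverse_rpolyInt : rpolyInt.reverse = rpolyInt := by
  rw [rpolyInt, reverse_toPoly_concat _ one_ne_zero]
  rfl

lemma rpoly_eq_toPoly : rpoly = toPoly (rCoeffs.map (Int.castRingHom ℚ) ++ [1]) := by
  simp only [rpoly, Int.coe_castRingHom, rCoeffs, Int.reduceNeg, List.map_cons, Int.cast_one,
    Int.cast_neg, Int.cast_ofNat, List.map_nil, List.cons_append, List.nil_append, toPoly_cons,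
    map_one, map_neg, map_ofNat, toPoly_nil, mul_zero, add_zero, mul_one]
  ring

lemma map_rpolyInt_rat : rpolyInt.map (Int.castRingHom ℚ) = rpoly := by
  rw [rpoly_eq_toPoly, rpolyInt, toPoly_map, List.map_append, List.map_singleton, map_one]

lemma aeval_one_rpolyInt : aeval (1 : ℂ) rpolyInt = 1 := by
  norm_num [rpolyInt, rCoeffs, map_ofNat]

lemma aeval_rpolyInt_three_four_fifths :
    aeval (⟨3 / 5, 4 / 5⟩ : ℂ) rpolyInt =
      (⟨3 / 5, 4 / 5⟩ : ℂ) ^ 6 * (-2359 / 15625 : ℝ) := by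
  norm_num [rpolyInt, rCoeffs, Complex.ext_iff, pow_succ, map_ofNat]

theorem modMonic_rCoeffs_mod_two : ∀ d ∈ Finset.Icc 1 6, ∀ v : Fin d → ZMod 2,
    (∀ x ∈ modMonic (List.ofFn v) ((rCoeffs ++ [1]).map (Int.castRingHom (ZMod 2))), x = 0) →
      d = 6 ∧ (List.ofFn v ++ [1]).reverse ≠ List.ofFn v ++ [1] := by
  decide

theorem monic_dvd_rpolyInt_mod_two {h : (ZMod 2)[X]} (hm : h.Monic)
    (hdvd : h ∣ rpolyInt.map (Int.castRingHom (ZMod 2))) (hd : h.natDegree ∈ Finset.Icc 1 6) :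
    h.natDegree = 6 ∧ h.reverse ≠ h := by
  have hh := eq_toPoly_coeffs_of_monic hm
  rw [hh, rpolyInt, toPoly_map, List.map_append, List.map_singleton, map_one,
    dvd_toPoly_iff_modMonic] at hdvd
  obtain ⟨h6, hrev⟩ := modMonic_rCoeffs_mod_two _ hd _ hdvd
  refine ⟨h6, fun hself => hrev ?_⟩
  rwa [hh, reverse_toPoly_concat _ one_ne_zero, toPoly_inj (by simp)] at hself

lemma monic_dvd_rpolyInt {q : ℤ[X]} (hq : q.Monic) (hdvd : q ∣ rpolyInt)
    (hd : q.natDegree ∈ Finset.Icc 1 6) :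
    q.natDegree = 6 ∧
      (q.map (Int.castRingHom (ZMod 2))).reverse ≠ q.map (Int.castRingHom (ZMod 2)) := by
  rw [← hq.natDegree_map (Int.castRingHom (ZMod 2))] at hd ⊢
  exact monic_dvd_rpolyInt_mod_two (hq.map _) (Polynomial.map_dvd _ hdvd) hd

lemma irreducible_of_monic_dvd_rpolyInt {g : ℤ[X]} (hg : g.Monic) (hdvd : g ∣ rpolyInt)
    (h6 : g.natDegree = 6) : Irreducible g := by
  refine (hg.irreducible_iff_lt_natDegree_lt fun h1 => by simp [h1] at h6).2 fun q hq hqd hqg => ?_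
  rw [Finset.mem_Ioc, h6] at hqd
  have := (monic_dvd_rpolyInt hq (hqg.trans hdvd) (Finset.mem_Icc.2 ⟨hqd.1, by omega⟩)).1
  omega

lemma not_dvd_reverse_of_monic_dvd_rpolyInt {g : ℤ[X]} (hg : g.Monic) (hdvd : g ∣ rpolyInt)
    (h6 : g.natDegree = 6) : ¬ g ∣ g.reverse := fun h =>
  (monic_dvd_rpolyInt hg hdvd (by simp [h6])).2 <| reverse_eq_self_of_dvd_reverse (hg.map _) <| by
    rw [hg.reverse_map]
    exact Polynomial.map_dvd _ h

lemma eq_zero_of_C_mul_rpolyInt_eq_mul_reverse {f : ℤ[X]} {c : ℤ} (hf : f.natDegree = 6)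
    (h : C c * rpolyInt = f * f.reverse) : c = 0 := by
  have hcircle (z : ℂ) (hz : ‖z‖ = 1) :
      (c : ℂ) * aeval z rpolyInt = z ^ 6 * (Complex.normSq (aeval z f) : ℂ) := by
    rw [← hf, ← aeval_mul_reverse_of_norm_eq_one f hz, ← h, map_mul, aeval_C,
      algebraMap_int_eq, eq_intCast]
  set z₀ : ℂ := ⟨3 / 5, 4 / 5⟩
  have h₁ : (c : ℝ) = Complex.normSq (aeval 1 f) := by
    have := hcircle 1 (by simp)
    rw [aeval_one_rpolyInt, mul_one, one_pow, one_mul] at this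
    exact_mod_cast this
  have h₀ : (c : ℝ) * (-2359 / 15625) = Complex.normSq (aeval z₀ f) := by
    have := hcircle z₀ (by simp [z₀, Complex.norm_def, Complex.normSq_apply]; norm_num)
    rw [aeval_rpolyInt_three_four_fifths, mul_left_comm,
      mul_right_inj' (pow_ne_zero _ (by simp [Complex.ext_iff]))] at this
    exact_mod_cast this
  have : (c : ℝ) = 0 := by
    linarith [Complex.normSq_nonneg (aeval 1 f), Complex.normSq_nonneg (aeval z₀ f)]
  exact_mod_cast this

theorem rpolyInt_irreducible : Irreducible rpolyInt := by
  refine (rpolyInt_monic.irreducible_iff_lt_natDegree_lt fun h => by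
    simpa [h] using rpolyInt_natDegree).2 ?_
  rintro g hg hgd ⟨f, hgf⟩
  rw [rpolyInt_natDegree, Finset.mem_Ioc] at hgd
  have h6 := (monic_dvd_rpolyInt hg ⟨f, hgf⟩ (Finset.mem_Icc.2 ⟨hgd.1, hgd.2⟩)).1
  have hf : f.Monic := hg.of_mul_monic_left (hgf ▸ rpolyInt_monic)
  have hf6 : f.natDegree = 6 := by
    have := congrArg natDegree hgf
    rw [hg.natDegree_mul hf, rpolyInt_natDegree] at this
    omega
  have hdvd : g ∣ f.reverse * g.reverse := by
    rw [← reverse_mul_of_domain, mul_comm, ← hgf, reverse_rpolyInt]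
    exact ⟨f, hgf⟩
  rcases (irreducible_of_monic_dvd_rpolyInt hg ⟨f, hgf⟩ h6).prime.dvd_or_dvd hdvd with hfr | hgr
  · set c := f.reverse.leadingCoeff
    have hc : f.reverse = C c * g := eq_leadingCoeff_mul_of_monic_of_dvd_of_natDegree_le hg hfr
      (by rw [h6, ← hf6]; exact reverse_natDegree_le f)
    have h0 := eq_zero_of_C_mul_rpolyInt_eq_mul_reverse hf6 (c := c) (by rw [hgf, hc]; ring)
    rw [h0, C_0, zero_mul, reverse_eq_zero] at hc
    exact hf.ne_zero hc
  · exact not_dvd_reverse_of_monic_dvd_rpolyInt hg ⟨f, hgf⟩ h6 hgr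

theorem rpoly_irreducible : Irreducible rpoly :=
  map_rpolyInt_rat ▸ (IsPrimitive.Int.irreducible_iff_irreducible_map_cast
    rpolyInt_monic.isPrimitive).1 rpolyInt_irreducible

def wCoeffs : List ℚ := [2, 1, -4, 1, 7, -2, -6, 5, 4, -3, -1, 1]

def zetaCoeffs : List ℚ := [-2, 6, 2, -14, 8, 16, -16, -4, 14, -3, -4, 2]

lemma wF_eq_mk : wF = AdjoinRoot.mk rpoly (toPoly wCoeffs) := by
  simp only [wF, zF, wCoeffs, toPoly_cons, toPoly_nil, map_ofNat, map_one, map_neg, mul_zero,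
    add_zero, mul_one, map_add, map_mul, AdjoinRoot.mk_X]
  ring

lemma zetaF_eq_mk : zetaF = AdjoinRoot.mk rpoly (toPoly zetaCoeffs) := by
  simp only [zetaF, zF, zetaCoeffs, toPoly_cons, toPoly_nil, map_ofNat, map_neg, mul_zero,
    add_zero, map_add, map_mul, AdjoinRoot.mk_X]
  ring

lemma wF_sextic_eq_zero :
    wF ^ 6 - 2 * wF ^ 5 + 2 * wF ^ 4 - 3 * wF ^ 3 + 2 * wF ^ 2 - 2 * wF + 1 = 0 := by
  have h : aeval wF (toPoly ([1, -2, 2, -3, 2, -2, 1] : List ℚ)) = 0 := by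
    rw [wF_eq_mk, AdjoinRoot.aeval_mk_eq_mk_comp, ← toPoly_comp,
      mk_toPoly_eq_of_modMonic_eq rpoly_eq_toPoly (q := []) (by decide +kernel), toPoly_nil,
      map_zero]
  convert h using 1
  simp only [toPoly_cons, toPoly_nil, map_one, map_neg, map_ofNat, mul_zero, add_zero, mul_one,
    map_add, map_mul, aeval_X]
  ring

lemma zetaF_cyclotomic_eq_zero :
    zetaF ^ 6 + zetaF ^ 5 + zetaF ^ 4 + zetaF ^ 3 + zetaF ^ 2 + zetaF + 1 = 0 := by
  have h : aeval zetaF (toPoly ([1, 1, 1, 1, 1, 1, 1] : List ℚ)) = 0 := by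
    rw [zetaF_eq_mk, AdjoinRoot.aeval_mk_eq_mk_comp, ← toPoly_comp,
      mk_toPoly_eq_of_modMonic_eq rpoly_eq_toPoly (q := []) (by decide +kernel), toPoly_nil,
      map_zero]
  convert h using 1
  simp only [toPoly_cons, toPoly_nil, map_one, mul_zero, add_zero, mul_one, map_add, map_mul,
    aeval_X]
  ring

lemma zF_eq : zF = -zetaF ^ 3 - zetaF ^ 4 - zetaF ^ 5 + wF * zetaF ^ 4 := by
  have h : AdjoinRoot.mk rpoly (toPoly ([0, 1] : List ℚ)) = AdjoinRoot.mk rpoly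
      (toPoly (PolyList.add (PolyList.comp [0, 0, 0, -1, -1, -1] zetaCoeffs)
        (PolyList.mul wCoeffs (PolyList.comp [0, 0, 0, 0, 1] zetaCoeffs)))) :=
    mk_toPoly_eq_of_modMonic_eq rpoly_eq_toPoly (by decide +kernel)
  rw [toPoly_add, toPoly_mul, toPoly_comp, toPoly_comp, map_add, map_mul,
    ← AdjoinRoot.aeval_mk_eq_mk_comp, ← AdjoinRoot.aeval_mk_eq_mk_comp, ← zetaF_eq_mk,
    ← wF_eq_mk] at h
  convert h using 1
  · simp [zF]
  · simp only [toPoly_cons, toPoly_nil, map_zero, map_neg, map_one, mul_zero, add_zero, mul_neg,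
      mul_one, zero_add, map_mul, aeval_X, map_add]
    ring

lemma adjoin_wF_zetaF : Algebra.adjoin ℚ {wF, zetaF} = ⊤ := by
  rw [eq_top_iff, ← AdjoinRoot.adjoinRoot_eq_top, Algebra.adjoin_le_iff, Set.singleton_subset_iff]
  have hw : wF ∈ Algebra.adjoin ℚ {wF, zetaF} := Algebra.subset_adjoin (by simp)
  have hz : zetaF ∈ Algebra.adjoin ℚ {wF, zetaF} := Algebra.subset_adjoin (by simp)
  change zF ∈ _
  rw [zF_eq]
  exact add_mem (sub_mem (sub_mem (neg_mem (pow_mem hz 3)) (pow_mem hz 4)) (pow_mem hz 5))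
    (mul_mem hw (pow_mem hz 4))

/-- `r` is irreducible over ℚ; in `F = ℚ[z]/(r(z))` the displayed element
`w` is a root of `w⁶ − 2w⁵ + 2w⁴ − 3w³ + 2w² − 2w + 1`, the displayed element `ζ` is a
primitive 7th root of unity (a root of `Φ₇`), and `F` is generated over ℚ by `w` and `ζ`,
so `F ≅ ℚ(w, ζ₇)`. -/
theorem rpoly_field_structure :
    Irreducible rpoly ∧
      wF ^ 6 - 2 * wF ^ 5 + 2 * wF ^ 4 - 3 * wF ^ 3 + 2 * wF ^ 2 - 2 * wF + 1 = 0 ∧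
      zetaF ^ 6 + zetaF ^ 5 + zetaF ^ 4 + zetaF ^ 3 + zetaF ^ 2 + zetaF + 1 = 0 ∧
      Algebra.adjoin ℚ {wF, zetaF} = ⊤ :=
  ⟨rpoly_irreducible, wF_sextic_eq_zero, zetaF_cyclotomic_eq_zero, adjoin_wF_zetaF⟩
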